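/- Let A = a₀ + 𝐚 be a paravector in Cl(0,3) with nonzero vector part, and write ‖𝐚‖ = √(a₁² + a₂² + a₃²) > 0. Then for any integers c₁, c₂, exp( (1/2)·log(a₀² + ‖𝐚‖²) + (𝐚/‖𝐚‖)·(atan2(‖𝐚‖, a₀) + π(c₁(1 + I) + c₂(1 - I))) ) = a₀ + 𝐚. -/

import Mathlib

open Real CliffordAlgebra

noncomputable section

/-- The quadratic form of signature (0,3): `Q(x) = -(x₁² + x₂² + x₃²)`. -/
def Q03 : QuadraticForm ℝ (Fin 3 → ℝ) := QuadraticMap.weightedSumSquares ℝ ![-1, -1, -1]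

/-- The real Clifford algebra Cl(0,3). -/
abbrev Cl03 := CliffordAlgebra Q03

/-- The canonical (module) topology on the finite-dimensional real algebra Cl(0,3). -/
instance : TopologicalSpace Cl03 := moduleTopology ℝ Cl03

/-- The orthonormal generators `e₁, e₂, e₃` (indexed here by `0, 1, 2`). -/
def e (i : Fin 3) : Cl03 := ι Q03 (Pi.single i 1)

/-- The pseudoscalar `I = e₁e₂e₃`. -/
def I3 : Cl03 := e 0 * e 1 * e 2

lemma Q03_apply (v : Fin 3 → ℝ) : Q03 v = -(v 0 ^2 + v 1 ^2 + v 2 ^2) := by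
  simp [Q03, QuadraticMap.weightedSumSquares_apply, Fin.sum_univ_three]
  ring

lemma e_sq (i : Fin 3) : e i * e i = -1 := by
  rw [e, ι_sq_scalar, Q03_apply]
  fin_cases i <;> simp

lemma e_anticomm {i j : Fin 3} (h : i ≠ j) : e i * e j = -(e j * e i) := by
  have := ι_mul_ι_add_swap (Q := Q03) (Pi.single i 1) (Pi.single j 1)
  rw [QuadraticMap.polar] at this
  have hp : Q03 (Pi.single i 1 + Pi.single j 1) - Q03 (Pi.single i 1) - Q03 (Pi.single j 1) = 0 := by
    simp only [Q03_apply]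
    fin_cases i <;> fin_cases j <;> simp_all <;> ring
  rw [hp, map_zero] at this
  rw [e, e]
  linear_combination (norm := noncomm_ring) this

lemma eswap {i j : Fin 3} (h : i ≠ j) (x : Cl03) : e i * (e j * x) = -(e j * (e i * x)) := by
  rw [← mul_assoc, e_anticomm h, neg_mul, mul_assoc]

lemma esqm (i : Fin 3) (x : Cl03) : e i * (e i * x) = -x := by
  rw [← mul_assoc, e_sq, neg_one_mul]

lemma s10 (x : Cl03) : e 1 * (e 0 * x) = -(e 0 * (e 1 * x)) := eswap (by decide) x
lemma s20 (x : Cl03) : e 2 * (e 0 * x) = -(e 0 * (e 2 * x)) := eswap (by decide) x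
lemma s21 (x : Cl03) : e 2 * (e 1 * x) = -(e 1 * (e 2 * x)) := eswap (by decide) x
lemma p10 : e 1 * e 0 = -(e 0 * e 1) := e_anticomm (by decide)
lemma p20 : e 2 * e 0 = -(e 0 * e 2) := e_anticomm (by decide)
lemma p21 : e 2 * e 1 = -(e 1 * e 2) := e_anticomm (by decide)

lemma I3_sq : I3 * I3 = 1 := by
  simp only [I3, mul_assoc, s10, s20, s21, p10, p20, p21, esqm, e_sq, mul_neg, neg_neg, neg_mul,
    mul_one, one_mul, neg_neg]

lemma e_comm_I3 (i : Fin 3) : e i * I3 = I3 * e i := by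
  fin_cases i
  · show e 0 * I3 = I3 * e 0
    simp only [I3, mul_assoc, s10, s20, s21, p10, p20, p21, esqm, e_sq, mul_neg, neg_neg, neg_mul,
      mul_one, one_mul]
  · show e 1 * I3 = I3 * e 1
    simp only [I3, mul_assoc, s10, s20, s21, p10, p20, p21, esqm, e_sq, mul_neg, neg_neg, neg_mul,
      mul_one, one_mul]
  · show e 2 * I3 = I3 * e 2
    simp only [I3, mul_assoc, s10, s20, s21, p10, p20, p21, esqm, e_sq, mul_neg, neg_neg, neg_mul,
      mul_one, one_mul]

instance : IsModuleTopology ℝ Cl03 := ⟨rfl⟩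

instance : ContinuousAdd Cl03 := IsModuleTopology.toContinuousAdd ℝ Cl03

instance : T2Space Cl03 := by
  let b := Module.Basis.ofVectorSpace ℝ Cl03
  let f : Cl03 →ₗ[ℝ] (Module.Basis.ofVectorSpaceIndex ℝ Cl03 → ℝ) :=
    (Finsupp.lcoeFun).comp (b.repr.toLinearMap)
  have hinj : Function.Injective f := by
    intro x y hxy
    apply b.repr.injective
    ext i
    exact congr_fun hxy i
  exact T2Space.of_injective_continuous hinj (IsModuleTopology.continuous_of_linearMap f)

/-- `ℂ` equipped with its module topology over `ℝ`. -/
def Cm : Type := ℂ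
instance : AddCommGroup Cm := inferInstanceAs (AddCommGroup ℂ)
instance : Module ℝ Cm := inferInstanceAs (Module ℝ ℂ)
instance : TopologicalSpace Cm := moduleTopology ℝ ℂ
instance : IsModuleTopology ℝ Cm := ⟨rfl⟩
instance : ContinuousAdd Cm := IsModuleTopology.toContinuousAdd ℝ Cm

def CmI : Cm := Complex.I
def CmOne : Cm := (1 : ℂ)

instance : IsModuleTopology ℝ ℂ := by
  apply IsModuleTopology.of_continuous_id (R := ℝ)
  have h : Continuous (fun z : ℂ => z.re • CmOne + z.im • CmI) :=
    (Complex.continuous_re.smul continuous_const).add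
      (Complex.continuous_im.smul continuous_const)
  have hid : (fun z : ℂ => z.re • CmOne + z.im • CmI) = (id : ℂ → Cm) := by
    funext z
    show z.re • (1:ℂ) + z.im • Complex.I = z
    simp [Complex.real_smul, Complex.re_add_im]
  rw [hid] at h
  exact h

/-- Idempotent `(1 + I3)/2`. -/
def Pp : Cl03 := (2⁻¹ : ℝ) • (1 + I3)
/-- Idempotent `(1 - I3)/2`. -/
def Qp : Cl03 := (2⁻¹ : ℝ) • (1 - I3)

lemma Pp_add_Qp : Pp + Qp = 1 := by
  rw [Pp, Qp]
  module

lemma Pp_mul_Pp : Pp * Pp = Pp := by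
  rw [Pp]
  simp only [smul_mul_assoc, mul_smul_comm, smul_smul, mul_add, add_mul, one_mul, mul_one, I3_sq]
  module

lemma Qp_mul_Qp : Qp * Qp = Qp := by
  rw [Qp]
  simp only [smul_mul_assoc, mul_smul_comm, smul_smul, mul_sub, sub_mul, one_mul, mul_one, I3_sq]
  module

lemma Pp_mul_Qp : Pp * Qp = 0 := by
  rw [Pp, Qp]
  simp only [smul_mul_assoc, mul_smul_comm, smul_smul, mul_sub, sub_mul, mul_add, add_mul,
    one_mul, mul_one, I3_sq]
  module

lemma Qp_mul_Pp : Qp * Pp = 0 := by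
  rw [Pp, Qp]
  simp only [smul_mul_assoc, mul_smul_comm, smul_smul, mul_sub, sub_mul, mul_add, add_mul,
    one_mul, mul_one, I3_sq]
  module

/-- The real-linear embedding of `ℂ` determined by a square root of `-1`. -/
def Fc (u : Cl03) : ℂ →ₗ[ℝ] Cl03 where
  toFun z := z.re • (1 : Cl03) + z.im • u
  map_add' z w := by
    simp only [Complex.add_re, Complex.add_im, add_smul]
    module
  map_smul' r z := by
    simp only [Complex.real_smul, Complex.mul_re, Complex.mul_im, Complex.ofReal_re,
      Complex.ofReal_im, RingHom.id_apply]
    module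

lemma Fc_apply (u : Cl03) (z : ℂ) : Fc u z = z.re • (1 : Cl03) + z.im • u := rfl

lemma Fc_one (u : Cl03) : Fc u 1 = 1 := by simp [Fc_apply]

lemma Fc_mul (u : Cl03) (hu : u * u = -1) (z w : ℂ) : Fc u (z * w) = Fc u z * Fc u w := by
  simp only [Fc_apply, Complex.mul_re, Complex.mul_im]
  simp only [add_mul, mul_add, smul_mul_assoc, mul_smul_comm, smul_smul, one_mul, mul_one, hu]
  module

lemma Fc_comm (u : Cl03) (hcomm : u * I3 = I3 * u) (z : ℂ) (x : Cl03)
    (hx : x = Pp ∨ x = Qp) : x * Fc u z = Fc u z * x := by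
  have h1 : (1 + I3) * u = u * (1 + I3) := by
    rw [add_mul, mul_add, one_mul, mul_one, hcomm]
  have h2 : (1 - I3) * u = u * (1 - I3) := by
    rw [sub_mul, mul_sub, one_mul, mul_one, hcomm]
  have key : x * u = u * x := by
    rcases hx with rfl | rfl
    · rw [Pp, smul_mul_assoc, mul_smul_comm, h1]
    · rw [Qp, smul_mul_assoc, mul_smul_comm, h2]
  simp only [Fc_apply, mul_add, add_mul, mul_smul_comm, smul_mul_assoc, mul_one, one_mul, key]

lemma key_pow (u : Cl03) (hu : u * u = -1) (hcomm : u * I3 = I3 * u) (z w : ℂ) (m : ℕ) :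
    (Fc u z * Pp + Fc u w * Qp) ^ m = Fc u (z ^ m) * Pp + Fc u (w ^ m) * Qp := by
  induction m with
  | zero => simp [Fc_one, Pp_add_Qp]
  | succ m ih =>
    rw [pow_succ, ih, pow_succ, pow_succ, Fc_mul u hu, Fc_mul u hu]
    have hC := Fc_comm u hcomm z (x := Pp) (Or.inl rfl)
    have hD := Fc_comm u hcomm w (x := Pp) (Or.inl rfl)
    have hC' := Fc_comm u hcomm z (x := Qp) (Or.inr rfl)
    have hD' := Fc_comm u hcomm w (x := Qp) (Or.inr rfl)
    set A := Fc u (z ^ m); set B := Fc u (w ^ m); set C := Fc u z; set D := Fc u w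
    have e1 : A * Pp * (C * Pp) = A * C * Pp := by
      rw [mul_assoc A Pp _, ← mul_assoc Pp C Pp, hC, mul_assoc C Pp Pp, Pp_mul_Pp, ← mul_assoc]
    have e2 : A * Pp * (D * Qp) = 0 := by
      rw [mul_assoc A Pp _, ← mul_assoc Pp D Qp, hD, mul_assoc D Pp Qp, Pp_mul_Qp, mul_zero,
        mul_zero]
    have e3 : B * Qp * (C * Pp) = 0 := by
      rw [mul_assoc B Qp _, ← mul_assoc Qp C Pp, hC', mul_assoc C Qp Pp, Qp_mul_Pp, mul_zero,
        mul_zero]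
    have e4 : B * Qp * (D * Qp) = B * D * Qp := by
      rw [mul_assoc B Qp _, ← mul_assoc Qp D Qp, hD', mul_assoc D Qp Qp, Qp_mul_Qp, ← mul_assoc]
    rw [add_mul, mul_add, mul_add, e1, e2, e3, e4, add_zero, zero_add]

/-- The exponential `exp M = ∑ₖ Mᵏ/k!` in Cl(0,3). -/
def expCl (M : Cl03) : Cl03 := ∑' n : ℕ, (n.factorial : ℝ)⁻¹ • M ^ n

/-- `atan2 y x` is the argument in `(-π, π]` of the complex number `x + iy`. -/
def atan2 (y x : ℝ) : ℝ := Complex.arg ⟨x, y⟩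

lemma hasSum_cexp (z : ℂ) :
    HasSum (fun m : ℕ => (m.factorial : ℝ)⁻¹ • z ^ m) (Complex.exp z) := by
  have h := NormedSpace.expSeries_div_hasSum_exp z
  rw [← Complex.exp_eq_exp_ℂ] at h
  have he : ∀ m : ℕ, (m.factorial : ℝ)⁻¹ • z ^ m = z ^ m / (m.factorial : ℂ) := by
    intro m
    rw [Complex.real_smul, div_eq_inv_mul]
    push_cast
    ring
  simpa only [he] using h

lemma expCl_eq (u : Cl03) (hu : u * u = -1) (hcomm : u * I3 = I3 * u) (z w : ℂ) :
    expCl (Fc u z * Pp + Fc u w * Qp) =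
      Fc u (Complex.exp z) * Pp + Fc u (Complex.exp w) * Qp := by
  set Lp : ℂ →ₗ[ℝ] Cl03 := (LinearMap.mulRight ℝ Pp).comp (Fc u) with hLp
  set Lq : ℂ →ₗ[ℝ] Cl03 := (LinearMap.mulRight ℝ Qp).comp (Fc u) with hLq
  have hLpc : Continuous Lp := IsModuleTopology.continuous_of_linearMap Lp
  have hLqc : Continuous Lq := IsModuleTopology.continuous_of_linearMap Lq
  have hs1 := (hasSum_cexp z).map Lp.toAddMonoidHom hLpc
  have hs2 := (hasSum_cexp w).map Lq.toAddMonoidHom hLqc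
  have hs := hs1.add hs2
  have hterm : ∀ m : ℕ,
      (Lp.toAddMonoidHom ∘ fun m : ℕ => (m.factorial : ℝ)⁻¹ • z ^ m) m +
        (Lq.toAddMonoidHom ∘ fun m : ℕ => (m.factorial : ℝ)⁻¹ • w ^ m) m =
      (m.factorial : ℝ)⁻¹ • (Fc u z * Pp + Fc u w * Qp) ^ m := by
    intro m
    rw [key_pow u hu hcomm, smul_add]
    simp only [Function.comp_apply, LinearMap.toAddMonoidHom_coe, map_smul, hLp, hLq,
      LinearMap.comp_apply, LinearMap.mulRight_apply]
  have hfun : (fun m : ℕ => (m.factorial : ℝ)⁻¹ • (Fc u z * Pp + Fc u w * Qp) ^ m) =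
      (fun m : ℕ =>
        (Lp.toAddMonoidHom ∘ fun m : ℕ => (m.factorial : ℝ)⁻¹ • z ^ m) m +
        (Lq.toAddMonoidHom ∘ fun m : ℕ => (m.factorial : ℝ)⁻¹ • w ^ m) m) :=
    funext fun m => (hterm m).symm
  rw [expCl, hfun, hs.tsum_eq]
  simp only [LinearMap.toAddMonoidHom_coe, hLp, hLq, LinearMap.comp_apply,
    LinearMap.mulRight_apply]

/-- exponential of the logarithm of a paravector in Cl(0,3). -/
theorem exp_log_paravector_Cl03
    (a0 a1 a2 a3 n : ℝ) (c1 c2 : ℤ) (va : Cl03)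
    (hva : va = a1 • e 0 + a2 • e 1 + a3 • e 2)
    (hn : n = Real.sqrt (a1 ^ 2 + a2 ^ 2 + a3 ^ 2))
    (hnpos : 0 < n) :
    expCl (algebraMap ℝ Cl03 ((1 / 2) * Real.log (a0 ^ 2 + n ^ 2)) +
      (1 / n) • (va * (algebraMap ℝ Cl03 (atan2 n a0) + (π * c1) • (1 + I3) +
        (π * c2) • (1 - I3)))) = algebraMap ℝ Cl03 a0 + va := by
  have hn0 : n ≠ 0 := ne_of_gt hnpos
  set θ : ℝ := atan2 n a0 with hθ
  set s : ℝ := (1 / 2) * Real.log (a0 ^ 2 + n ^ 2) with hs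
  set u : Cl03 := (1 / n) • va with hu_def
  have hva' : va = n • u := by
    rw [hu_def, smul_smul]
    rw [show n * (1 / n) = 1 by field_simp, one_smul]
  -- u is a square root of -1
  have hQva : va * va = algebraMap ℝ Cl03 (-(n ^ 2)) := by
    have hsum : (![a1, a2, a3] : Fin 3 → ℝ) =
        a1 • (Pi.single 0 1 : Fin 3 → ℝ) + a2 • (Pi.single 1 1 : Fin 3 → ℝ) +
          a3 • (Pi.single 2 1 : Fin 3 → ℝ) := by
      funext k
      fin_cases k <;> simp [Pi.single, Function.update]
    have hv : va = ι Q03 ![a1, a2, a3] := by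
      rw [hva, hsum]
      simp [e, map_add, map_smul]
    rw [hv, ι_sq_scalar, Q03_apply]
    congr 1
    have h2 : n ^ 2 = a1 ^ 2 + a2 ^ 2 + a3 ^ 2 := by
      rw [hn, Real.sq_sqrt (by positivity)]
    simp [Pi.single, Function.update, h2]
  have hu : u * u = -1 := by
    rw [hu_def, smul_mul_assoc, mul_smul_comm, hQva, smul_smul, Algebra.algebraMap_eq_smul_one,
      smul_smul]
    rw [show (1 / n * (1 / n) * -n ^ 2 : ℝ) = -1 by field_simp [pow_two]]
    module
  -- u commutes with I3
  have hcomm : u * I3 = I3 * u := by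
    rw [hu_def, smul_mul_assoc, mul_smul_comm]
    congr 1
    simp only [hva, add_mul, mul_add, smul_mul_assoc, mul_smul_comm, e_comm_I3]
  set z₁ : ℂ := ⟨s, θ + 2 * π * c1⟩ with hz₁
  set z₂ : ℂ := ⟨s, θ + 2 * π * c2⟩ with hz₂
  -- the argument equals `Fc u z₁ * Pp + Fc u z₂ * Qp`
  have h5 : ∀ X : Cl03, (1 / n : ℝ) • (va * X) = u * X := by
    intro X
    rw [hva', smul_mul_assoc, smul_smul]
    rw [show (1 / n) * n = 1 by field_simp, one_smul]
  have hM : algebraMap ℝ Cl03 s +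
      (1 / n : ℝ) • (va * (algebraMap ℝ Cl03 θ + (π * c1) • (1 + I3) + (π * c2) • (1 - I3))) =
      Fc u z₁ * Pp + Fc u z₂ * Qp := by
    rw [h5]
    simp only [Fc_apply, hz₁, hz₂, Pp, Qp, Algebra.algebraMap_eq_smul_one, mul_add, mul_sub,
      add_mul, sub_mul, mul_smul_comm, smul_mul_assoc, mul_one, one_mul, smul_add, smul_sub,
      smul_smul]
    module
  rw [hM, expCl_eq u hu hcomm]
  -- compute the complex exponentials
  have hr : Real.exp s = Real.sqrt (a0 ^ 2 + n ^ 2) := by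
    have hx : (0 : ℝ) < a0 ^ 2 + n ^ 2 := by positivity
    rw [Real.sqrt_eq_rpow, Real.rpow_def_of_pos hx, hs]
    ring_nf
  have hrpos : 0 < Real.sqrt (a0 ^ 2 + n ^ 2) := by
    rw [← hr]; exact Real.exp_pos s
  have hzne : (⟨a0, n⟩ : ℂ) ≠ 0 := by
    intro h
    exact hn0 (by simpa using congrArg Complex.im h)
  have habs : ‖(⟨a0, n⟩ : ℂ)‖ = Real.sqrt (a0 ^ 2 + n ^ 2) := by
    rw [Complex.norm_def, Complex.normSq_mk]
    congr 1
    ring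
  have hcos : Real.cos θ = a0 / Real.sqrt (a0 ^ 2 + n ^ 2) := by
    have := Complex.cos_arg hzne
    rwa [habs] at this
  have hsin : Real.sin θ = n / Real.sqrt (a0 ^ 2 + n ^ 2) := by
    have := Complex.sin_arg (⟨a0, n⟩ : ℂ)
    rwa [habs] at this
  have hexp0 : Complex.exp ⟨s, θ⟩ = ⟨a0, n⟩ := by
    apply Complex.ext
    · rw [Complex.exp_re]
      show Real.exp s * Real.cos θ = a0
      rw [hr, hcos]
      field_simp
    · rw [Complex.exp_im]
      show Real.exp s * Real.sin θ = n
      rw [hr, hsin]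
      field_simp
  have hE : ∀ c : ℤ, Complex.exp ⟨s, θ + 2 * π * c⟩ = ⟨a0, n⟩ := by
    intro c
    have hsplit : (⟨s, θ + 2 * π * c⟩ : ℂ) = (⟨s, θ⟩ : ℂ) + (c : ℂ) * (2 * π * Complex.I) := by
      apply Complex.ext <;>
        simp [Complex.mul_re, Complex.mul_im] <;> push_cast <;> ring
    rw [hsplit, Complex.exp_add, Complex.exp_int_mul_two_pi_mul_I, mul_one, hexp0]
  rw [hz₁, hz₂, hE c1, hE c2, ← mul_add, Pp_add_Qp, mul_one, Fc_apply]
  rw [hva', Algebra.algebraMap_eq_smul_one]
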